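/- arXiv:1412.2226 — 3 statements merged into one kernel-verified Lean document; each statement's English description precedes it below -/
import Mathlib

section
/- Let M be a balanced allocation. M is the outcome of every balanced alternation policy if and only if for every round index t with 1 ≤ t ≤ k and every agent a_j, the item p_j^t is agent a_j's most preferred item among the items of I not contained in { p_{j'}^i : 1 ≤ j' ≤ n, 1 ≤ i < t } (the items M allocates in earlier rounds). -/
open Finset
open scoped Classical

/-- The most preferred item of a nonempty finset w.r.t. a linear order
(greater means more preferred). -/
noncomputable def favorite {ι : Type} (L : LinearOrder ι) (S : Finset ι) (h : S.Nonempty) : ι :=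
  @Finset.max' ι L S h

/-- Sequential allocation: process the turns in order; at each turn the agent whose
turn it is picks her most preferred item among the items not yet allocated.
Returns the list of (agent, item) picks, in order. -/
noncomputable def seqAlloc {n : ℕ} {ι : Type} [DecidableEq ι]
    (P : Fin n → LinearOrder ι) : List (Fin n) → Finset ι → List (Fin n × ι)
  | [], _ => []
  | a :: rest, S =>
    if h : S.Nonempty then
      (a, favorite (P a) S h) :: seqAlloc P rest (S.erase (favorite (P a) S h))
    else []

/-- `M` is the outcome of the policy `π`: every item is picked by the agent that
`M` assigns it to. -/
def IsOutcome {n : ℕ} {ι : Type} [Fintype ι] [DecidableEq ι]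
    (P : Fin n → LinearOrder ι) (π : List (Fin n)) (M : ι → Fin n) : Prop :=
  ∀ o : ι, (M o, o) ∈ seqAlloc P π Finset.univ

/-- The set of items that agent `a` picks under the policy `π`. -/
noncomputable def receives {n : ℕ} {ι : Type} [Fintype ι] [DecidableEq ι]
    (P : Fin n → LinearOrder ι) (π : List (Fin n)) (a : Fin n) : Finset ι :=
  Finset.univ.filter (fun o => (a, o) ∈ seqAlloc P π Finset.univ)

/-- An allocation `M` is Pareto optimal if there is no bijection `f` of the items such
that every agent weakly prefers `f o` to `o` for each item `o` she gets, with at least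
one strict preference. -/
def ParetoOptimal {n : ℕ} {ι : Type} (P : Fin n → LinearOrder ι) (M : ι → Fin n) : Prop :=
  ¬ ∃ f : ι ≃ ι, (∀ o : ι, (P (M o)).le o (f o)) ∧ (∃ o : ι, (P (M o)).lt o (f o))

/-- A policy is balanced if every agent has exactly `k` turns. -/
def BalancedPolicy {n : ℕ} (k : ℕ) (π : List (Fin n)) : Prop :=
  ∀ a : Fin n, π.count a = k

/-- An allocation is balanced if every agent receives exactly `k` items. -/
def BalancedAlloc {n : ℕ} {ι : Type} [Fintype ι] (k : ℕ) (M : ι → Fin n) : Prop :=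
  ∀ a : Fin n, (Finset.univ.filter (fun o => M o = a)).card = k

/-- A policy is recursively balanced if it splits into `k` consecutive rounds of `n`
turns each, every agent having exactly one turn in each round. -/
def RecBalanced (n k : ℕ) (π : List (Fin n)) : Prop :=
  ∃ rounds : List (List (Fin n)), rounds.length = k ∧
    (∀ r ∈ rounds, r.length = n ∧ ∀ a : Fin n, r.count a = 1) ∧
    π = rounds.flatten

/-- A strict alternation policy: every one of the `k` rounds uses the same order `σ`
over the agents. -/
def StrictAlt (n k : ℕ) (π : List (Fin n)) : Prop :=
  ∃ σ : List (Fin n), σ.length = n ∧ (∀ a : Fin n, σ.count a = 1) ∧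
    π = (List.replicate k σ).flatten

/-- A balanced alternation policy: odd-numbered rounds use the order `σ` over the agents
and even-numbered rounds use its reverse. -/
def BalAlt (n k : ℕ) (π : List (Fin n)) : Prop :=
  ∃ σ : List (Fin n), σ.length = n ∧ (∀ a : Fin n, σ.count a = 1) ∧
    π = ((List.range k).map (fun r => if r % 2 = 0 then σ else σ.reverse)).flatten

/-- `p j i` (for `1 ≤ i ≤ k`) is the item ranked `i`-th by agent `j` among the items `M`
allocates to `j`: it is allocated to `j`, and exactly `i - 1` of the items allocated
to `j` are strictly preferred to it by agent `j`. -/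
def IsRankingOf {n : ℕ} {ι : Type} [Fintype ι] (P : Fin n → LinearOrder ι) (k : ℕ)
    (M : ι → Fin n) (p : Fin n → ℕ → ι) : Prop :=
  ∀ (j : Fin n) (i : ℕ), 1 ≤ i → i ≤ k →
    M (p j i) = j ∧
    (Finset.univ.filter (fun o => M o = j ∧ (P j).lt (p j i) o)).card = i - 1

/-- Condition 3: for all `1 ≤ t < s ≤ k` and all agents `j, j'`, agent `j` strictly
prefers `p j t` to `p j' s`. -/
def Cond3 {n : ℕ} {ι : Type} (P : Fin n → LinearOrder ι) (k : ℕ) (p : Fin n → ℕ → ι) : Prop :=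
  ∀ t s : ℕ, 1 ≤ t → t < s → s ≤ k → ∀ j j' : Fin n, (P j).lt (p j' s) (p j t)

/-- The edge relation of the directed graph `G_M`: for odd `i ≤ k` an edge `a → b`
whenever `b` strictly prefers `p a i` to `p b i`, and for even `i ≤ k` an edge `a → b`
whenever `a` strictly prefers `p b i` to `p a i`. -/
def GM {n : ℕ} {ι : Type} (P : Fin n → LinearOrder ι) (k : ℕ) (p : Fin n → ℕ → ι)
    (a b : Fin n) : Prop :=
  (∃ i : ℕ, 1 ≤ i ∧ i ≤ k ∧ i % 2 = 1 ∧ (P b).lt (p b i) (p a i)) ∨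
  (∃ i : ℕ, 1 ≤ i ∧ i ≤ k ∧ i % 2 = 0 ∧ (P a).lt (p a i) (p b i))

/-- The edge relation of the directed graph `H_M`: for each `i ≤ k` an edge `a → b`
whenever `b` strictly prefers `p a i` to `p b i`. -/
def HM {n : ℕ} {ι : Type} (P : Fin n → LinearOrder ι) (k : ℕ) (p : Fin n → ℕ → ι)
    (a b : Fin n) : Prop :=
  ∃ i : ℕ, 1 ≤ i ∧ i ≤ k ∧ (P b).lt (p b i) (p a i)

/-- The `k` most preferred items of agent `j`: those items with fewer than `k` items
strictly preferred to them by `j`. -/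
noncomputable def topItems {n : ℕ} {ι : Type} [Fintype ι] (P : Fin n → LinearOrder ι)
    (k : ℕ) (j : Fin n) : Finset ι :=
  Finset.univ.filter (fun o => (Finset.univ.filter (fun o' => (P j).lt o o')).card < k)

/-- The rank of item `o` in agent `j`'s preference (the most preferred item has rank 1). -/
noncomputable def rankOf {n : ℕ} {ι : Type} [Fintype ι] (P : Fin n → LinearOrder ι)
    (j : Fin n) (o : ι) : ℕ :=
  (Finset.univ.filter (fun o' => (P j).lt o o')).card + 1
/-!
Call round `t` greedy if every agent's `t`-th item `p j t` is her favourite among the items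
that `M` does not hand out in rounds `1, …, t - 1`. If all rounds are greedy, then in any
recursively balanced policy round `t` allocates exactly the items `p j t`, in whatever order the
agents move, because these items are distinct; so `M` is the outcome. Conversely, suppose
rounds `1, …, t - 1` are greedy and fix an agent `j`. Choose `σ` so that `j` moves first in
round `t` of the balanced alternation policy. After the first `t - 1` rounds the remaining
items are exactly those `M` hands out from round `t` on, and `j` takes her favourite `x` among
them. Since `M` is the outcome, `x` is one of `j`'s items from round `t` on, so `j` ranks it no
higher than `p j t`. Hence round `t` is greedy too.
-/

section

variable {n : ℕ} {ι : Type}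

section Favorite

variable (L : LinearOrder ι) (S : Finset ι) (hS : S.Nonempty)

theorem favorite_mem : favorite L S hS ∈ S := by
  let _ := L
  exact S.max'_mem hS

theorem le_favorite {o : ι} (ho : o ∈ S) : L.le o (favorite L S hS) := by
  let _ := L
  exact S.le_max' o ho

theorem favorite_eq {x : ι} (hx : x ∈ S) (hmax : ∀ o ∈ S, L.le o x) : favorite L S hS = x := by
  let _ := L
  exact le_antisymm (S.max'_le hS x hmax) (S.le_max' x hx)

end Favorite

section SeqAlloc

variable [DecidableEq ι] (P : Fin n → LinearOrder ι)

theorem mem_seqAlloc_cons_favorite (a : Fin n) (l : List (Fin n)) {S : Finset ι}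
    (hS : S.Nonempty) : (a, favorite (P a) S hS) ∈ seqAlloc P (a :: l) S := by
  rw [seqAlloc, dif_pos hS]
  exact List.mem_cons_self

theorem mem_of_mem_seqAlloc {l : List (Fin n)} {S : Finset ι} {a : Fin n} {o : ι}
    (h : (a, o) ∈ seqAlloc P l S) : o ∈ S := by
  induction l generalizing S with
  | nil => simp [seqAlloc] at h
  | cons b l ih =>
    rw [seqAlloc] at h
    split_ifs at h with hS
    · rcases List.mem_cons.mp h with h | h
      · rw [(Prod.mk.inj h).2]
        exact favorite_mem _ _ _
      · exact mem_of_mem_erase (ih h)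
    · simp at h

theorem nodup_map_snd_seqAlloc (l : List (Fin n)) (S : Finset ι) :
    ((seqAlloc P l S).map Prod.snd).Nodup := by
  induction l generalizing S with
  | nil => simp [seqAlloc]
  | cons b l ih =>
    rw [seqAlloc]
    split_ifs with hS
    · refine List.nodup_cons.mpr ⟨fun hx => ?_, ih _⟩
      obtain ⟨⟨a, x⟩, hmem, rfl⟩ := List.mem_map.mp hx
      exact notMem_erase _ _ (mem_of_mem_seqAlloc P hmem)
    · exact List.nodup_nil

theorem eq_of_mem_seqAlloc {l : List (Fin n)} {S : Finset ι} {a b : Fin n} {o : ι}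
    (ha : (a, o) ∈ seqAlloc P l S) (hb : (b, o) ∈ seqAlloc P l S) : a = b :=
  (Prod.mk.inj (List.inj_on_of_nodup_map (nodup_map_snd_seqAlloc P l S) ha hb rfl)).1

/-- The items `q a` are distinct, so each is still available when agent `a`'s turn comes. -/
theorem seqAlloc_append_of_forall_favorite {r : List (Fin n)} (l : List (Fin n))
    {S : Finset ι} {q : Fin n → ι} (hr : r.Nodup) (hq : q.Injective) (hmem : ∀ a ∈ r, q a ∈ S)
    (hfav : ∀ a ∈ r, ∀ o ∈ S, (P a).le o (q a)) :
    seqAlloc P (r ++ l) S = r.map (fun a => (a, q a)) ++ seqAlloc P l (S \ r.toFinset.image q) := by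
  induction r generalizing S with
  | nil => simp
  | cons a r ih =>
    obtain ⟨har, hr⟩ := List.nodup_cons.mp hr
    have hqa : q a ∈ S := hmem a List.mem_cons_self
    have hS : S.Nonempty := ⟨q a, hqa⟩
    have hrest := ih (S := S.erase (q a)) hr
      (fun b hb => mem_erase.mpr ⟨fun h => har (hq h ▸ hb), hmem b (List.mem_cons_of_mem a hb)⟩)
      (fun b hb o ho => hfav b (List.mem_cons_of_mem a hb) o (mem_of_mem_erase ho))
    have hset : S.erase (q a) \ r.toFinset.image q = S \ (a :: r).toFinset.image q := by
      ext o
      simp only [mem_sdiff, mem_erase, List.toFinset_cons, image_insert, mem_insert]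
      tauto
    rw [List.cons_append, seqAlloc, dif_pos hS,
      favorite_eq _ _ hS hqa (hfav a List.mem_cons_self), hrest, hset]
    simp

end SeqAlloc

theorem List.perm_finRange_iff {r : List (Fin n)} :
    r.Perm (List.finRange n) ↔ r.length = n ∧ ∀ a, r.count a = 1 := by
  refine ⟨fun h => ⟨by simpa using h.length_eq, fun a => by rw [h.count_eq, List.count_finRange]⟩,
    fun ⟨_, h⟩ => List.perm_iff_count.mpr fun a => by rw [h, List.count_finRange]⟩

theorem List.toFinset_eq_univ_of_perm_finRange {r : List (Fin n)} (hr : r.Perm (List.finRange n)) :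
    r.toFinset = univ := by
  ext a
  simp [hr.mem_iff]

/-- Round `r` of the policy `BalAlt` builds from `σ`, counting rounds from `0`. -/
def altRound (σ : List (Fin n)) (r : ℕ) : List (Fin n) :=
  if r % 2 = 0 then σ else σ.reverse

theorem altRound_perm {σ : List (Fin n)} (hσ : σ.Perm (List.finRange n)) (r : ℕ) :
    (altRound σ r).Perm (List.finRange n) := by
  unfold altRound
  split
  · exact hσ
  · exact (List.reverse_perm σ).trans hσ

/-- `σ` starts with `j` if `r` is even and ends with `j` otherwise. -/
theorem exists_altRound_eq_cons (j : Fin n) (r : ℕ) :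
    ∃ σ : List (Fin n), σ.Perm (List.finRange n) ∧
      altRound σ r = j :: (List.finRange n).erase j := by
  have hjσ := (List.perm_cons_erase (List.mem_finRange j)).symm
  by_cases hr : r % 2 = 0
  · exact ⟨_, hjσ, by simp [altRound, hr]⟩
  · exact ⟨_, (List.reverse_perm _).trans hjσ, by simp [altRound, hr]⟩

theorem BalAlt.recBalanced {k : ℕ} {π : List (Fin n)} (h : BalAlt n k π) : RecBalanced n k π := by
  obtain ⟨σ, hlen, hcount, rfl⟩ := h
  refine ⟨(List.range k).map (altRound σ), by simp, fun r hr => ?_, rfl⟩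
  obtain ⟨i, -, rfl⟩ := List.mem_map.mp hr
  exact List.perm_finRange_iff.mp (altRound_perm (List.perm_finRange_iff.mpr ⟨hlen, hcount⟩) i)

theorem List.exists_flatten_map_range_eq_append {α : Type} (f : ℕ → List α) {m k : ℕ}
    (h : m < k) : ∃ rest, ((List.range k).map f).flatten =
      ((List.range m).map f).flatten ++ (f m ++ rest) := by
  obtain ⟨d, rfl⟩ := Nat.exists_eq_add_of_lt h
  refine ⟨(((List.range d).map (fun x => m + 1 + x)).map f).flatten, ?_⟩
  rw [show m + d + 1 = m + 1 + d by omega, List.range_add, List.range_succ]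
  simp

section AllocatedBefore

variable [DecidableEq ι] {p : Fin n → ℕ → ι}

/-- The paper's `{p_j^i : 1 ≤ j ≤ n, 1 ≤ i < t}`. -/
def allocatedBefore (p : Fin n → ℕ → ι) (t : ℕ) : Finset ι :=
  image (fun x : Fin n × ℕ => p x.1 x.2) (univ ×ˢ Ico 1 t)

@[simp]
theorem allocatedBefore_one : allocatedBefore p 1 = ∅ := by
  simp [allocatedBefore]

theorem allocatedBefore_succ {t : ℕ} (ht : 1 ≤ t) :
    allocatedBefore p (t + 1) = allocatedBefore p t ∪ univ.image (fun j => p j t) := by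
  ext o
  simp only [allocatedBefore, mem_union, mem_image, mem_product, mem_Ico, mem_univ, true_and,
    Prod.exists]
  constructor
  · rintro ⟨j, i, ⟨hi1, hit⟩, rfl⟩
    rcases Nat.lt_succ_iff_lt_or_eq.mp hit with hit | rfl
    · exact Or.inl ⟨j, i, ⟨hi1, hit⟩, rfl⟩
    · exact Or.inr ⟨j, rfl⟩
  · rintro (⟨j, i, ⟨hi1, hit⟩, rfl⟩ | ⟨j, rfl⟩)
    · exact ⟨j, i, ⟨hi1, by omega⟩, rfl⟩
    · exact ⟨j, t, ⟨ht, by omega⟩, rfl⟩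

def IsGreedyRound (P : Fin n → LinearOrder ι) (p : Fin n → ℕ → ι) (t : ℕ) : Prop :=
  ∀ (j : Fin n) (o : ι), o ∉ allocatedBefore p t → (P j).le o (p j t)

end AllocatedBefore

section Ranking

variable [Fintype ι] {P : Fin n → LinearOrder ι} {k : ℕ} {M : ι → Fin n} {p : Fin n → ℕ → ι}

theorem IsRankingOf.injOn (hp : IsRankingOf P k M p) (j : Fin n) :
    Set.InjOn (p j) (Set.Icc 1 k) := by
  rintro i ⟨hi, hik⟩ i' ⟨hi', hi'k⟩ heq
  have hc := (hp j i hi hik).2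
  rw [heq, (hp j i' hi' hi'k).2] at hc
  omega

theorem IsRankingOf.lt_of_lt (hp : IsRankingOf P k M p) (j : Fin n) {i i' : ℕ} (hi : 1 ≤ i)
    (hii' : i < i') (hi' : i' ≤ k) : (P j).lt (p j i') (p j i) := by
  let _ := P j
  have hne : p j i' ≠ p j i := fun h => by
    have := hp.injOn j ⟨by omega, hi'⟩ ⟨hi, by omega⟩ h
    omega
  refine lt_of_le_of_ne (not_lt.mp fun hlt => ?_) hne
  have hsub : univ.filter (fun o => M o = j ∧ (P j).lt (p j i') o) ⊆
      univ.filter (fun o => M o = j ∧ (P j).lt (p j i) o) := by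
    intro o ho
    simp only [mem_filter, mem_univ, true_and] at ho ⊢
    exact ⟨ho.1, hlt.trans ho.2⟩
  have := card_le_card hsub
  rw [(hp j i hi (by omega)).2, (hp j i' (by omega) hi').2] at this
  omega

variable [DecidableEq ι]

theorem IsRankingOf.exists_index (hbal : BalancedAlloc k M) (hp : IsRankingOf P k M p) (o : ι) :
    ∃ i, 1 ≤ i ∧ i ≤ k ∧ p (M o) i = o := by
  have hsub : (Icc 1 k).image (p (M o)) ⊆ univ.filter (fun o' => M o' = M o) := by
    intro o' ho'
    obtain ⟨i, hi, rfl⟩ := mem_image.mp ho'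
    rw [mem_Icc] at hi
    simpa using (hp (M o) i hi.1 hi.2).1
  have hcard : (univ.filter (fun o' => M o' = M o)).card ≤ ((Icc 1 k).image (p (M o))).card := by
    rw [hbal, card_image_of_injOn (by simpa using hp.injOn (M o)), Nat.card_Icc]
    omega
  have ho : o ∈ (Icc 1 k).image (p (M o)) := by
    rw [eq_of_subset_of_card_le hsub hcard]
    simp
  obtain ⟨i, hi, hpi⟩ := mem_image.mp ho
  exact ⟨i, (mem_Icc.mp hi).1, (mem_Icc.mp hi).2, hpi⟩

theorem IsRankingOf.notMem_allocatedBefore (hp : IsRankingOf P k M p) (j : Fin n) {t : ℕ}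
    (ht : 1 ≤ t) (htk : t ≤ k) : p j t ∉ allocatedBefore p t := by
  intro hmem
  obtain ⟨⟨j', i⟩, hji, heq⟩ := mem_image.mp hmem
  simp only [mem_product, mem_univ, mem_Ico, true_and] at hji
  have hj : j' = j := by rw [← (hp j' i hji.1 (by omega)).1, heq, (hp j t ht htk).1]
  subst hj
  have := hp.injOn j' ⟨hji.1, by omega⟩ ⟨ht, htk⟩ heq
  omega

theorem IsRankingOf.le_of_notMem_allocatedBefore (hbal : BalancedAlloc k M)
    (hp : IsRankingOf P k M p) {t : ℕ} (ht : 1 ≤ t) {x : ι} (hx : x ∉ allocatedBefore p t) :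
    (P (M x)).le x (p (M x) t) := by
  obtain ⟨i, hi, hik, hpi⟩ := hp.exists_index hbal x
  have hti : t ≤ i := by
    by_contra! hit
    exact hx (mem_image.mpr ⟨(M x, i), by simp [hi, hit], hpi⟩)
  let _ := P (M x)
  suffices p (M x) i ≤ p (M x) t by rwa [hpi] at this
  rcases hti.eq_or_lt with rfl | hti
  · exact le_rfl
  · exact (hp.lt_of_lt _ ht hti hik).le

theorem IsRankingOf.seqAlloc_round_append (hp : IsRankingOf P k M p) {r : List (Fin n)}
    (l : List (Fin n)) (hr : r.Perm (List.finRange n)) {t : ℕ} (ht : 1 ≤ t) (htk : t ≤ k)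
    (hg : IsGreedyRound P p t) :
    seqAlloc P (r ++ l) (allocatedBefore p t)ᶜ =
      r.map (fun j => (j, p j t)) ++ seqAlloc P l (allocatedBefore p (t + 1))ᶜ := by
  have hinj : (fun j => p j t).Injective := fun j j' h => by
    rw [← (hp j t ht htk).1, ← (hp j' t ht htk).1]
    exact congrArg M h
  rw [seqAlloc_append_of_forall_favorite P l ((List.nodup_finRange n).perm hr.symm) hinj
    (fun j _ => mem_compl.mpr (hp.notMem_allocatedBefore j ht htk))
    (fun j _ o ho => hg j o (mem_compl.mp ho)), List.toFinset_eq_univ_of_perm_finRange hr,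
    allocatedBefore_succ ht, compl_union, sdiff_eq_inter_compl]

theorem IsRankingOf.seqAlloc_flatten_append (hp : IsRankingOf P k M p)
    (rs : List (List (Fin n))) (l : List (Fin n)) {t : ℕ} (ht : 1 ≤ t)
    (hk : t + rs.length ≤ k + 1) (hrs : ∀ r ∈ rs, r.Perm (List.finRange n))
    (hg : ∀ s, t ≤ s → s < t + rs.length → IsGreedyRound P p s) :
    ∃ L, seqAlloc P (rs.flatten ++ l) (allocatedBefore p t)ᶜ =
        L ++ seqAlloc P l (allocatedBefore p (t + rs.length))ᶜ ∧
      ∀ s j, t ≤ s → s < t + rs.length → (j, p j s) ∈ L := by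
  induction rs generalizing t with
  | nil => exact ⟨[], by simp, fun s j h1 h2 => by simp at h2; omega⟩
  | cons r rs ih =>
    simp only [List.length_cons] at hk hg ⊢
    obtain ⟨L, hL, hmemL⟩ := ih (t := t + 1) (by omega) (by omega)
      (fun r' hr' => hrs r' (List.mem_cons_of_mem r hr'))
      (fun s h1 h2 => hg s (by omega) (by omega))
    have hr := hrs r List.mem_cons_self
    refine ⟨r.map (fun j => (j, p j t)) ++ L, ?_, fun s j h1 h2 => ?_⟩
    · rw [List.flatten_cons, List.append_assoc,
        hp.seqAlloc_round_append _ hr ht (by omega) (hg t le_rfl (by omega)), hL,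
        List.append_assoc, show t + 1 + rs.length = t + (rs.length + 1) by omega]
    · rcases h1.eq_or_lt with rfl | h1
      · exact List.mem_append_left _
          (List.mem_map.mpr ⟨j, hr.mem_iff.mpr (List.mem_finRange j), rfl⟩)
      · exact List.mem_append_right _ (hmemL s j h1 (by omega))

theorem IsRankingOf.isOutcome_of_isGreedyRound (hbal : BalancedAlloc k M)
    (hp : IsRankingOf P k M p) (hg : ∀ t, 1 ≤ t → t ≤ k → IsGreedyRound P p t)
    {π : List (Fin n)} (hπ : RecBalanced n k π) : IsOutcome P π M := by
  obtain ⟨rs, hlen, hrs, rfl⟩ := hπ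
  obtain ⟨L, hL, hmemL⟩ := hp.seqAlloc_flatten_append rs [] le_rfl (by omega)
    (fun r hr => List.perm_finRange_iff.mpr (hrs r hr)) (fun s h1 h2 => hg s h1 (by omega))
  intro o
  obtain ⟨i, hi, hik, hpi⟩ := hp.exists_index hbal o
  have hseq : seqAlloc P rs.flatten univ = L := by
    simpa [seqAlloc] using hL
  rw [hseq]
  simpa [hpi] using hmemL i (M o) hi (by omega)

theorem IsRankingOf.favorite_mem_seqAlloc_of_altRound_eq_cons (hp : IsRankingOf P k M p)
    {σ : List (Fin n)} (hσ : σ.Perm (List.finRange n)) {t : ℕ} (ht : 1 ≤ t) (htk : t ≤ k)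
    (hg : ∀ s, 1 ≤ s → s < t → IsGreedyRound P p s) {j : Fin n} {tail : List (Fin n)}
    (hround : altRound σ (t - 1) = j :: tail) (hS : (allocatedBefore p t)ᶜ.Nonempty) :
    (j, favorite (P j) (allocatedBefore p t)ᶜ hS) ∈
      seqAlloc P ((List.range k).map (altRound σ)).flatten univ := by
  obtain ⟨rest, hπ⟩ := List.exists_flatten_map_range_eq_append (altRound σ)
    (show t - 1 < k by omega)
  obtain ⟨L, hL, -⟩ := hp.seqAlloc_flatten_append ((List.range (t - 1)).map (altRound σ))
    (altRound σ (t - 1) ++ rest) le_rfl (by simp; omega)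
    (fun r hr => by obtain ⟨i, -, rfl⟩ := List.mem_map.mp hr; exact altRound_perm hσ i)
    (fun s h1 h2 => hg s h1 (by simp at h2; omega))
  rw [List.length_map, List.length_range, show 1 + (t - 1) = t by omega] at hL
  rw [hπ, ← compl_empty, ← allocatedBefore_one (p := p), hL, hround, List.cons_append]
  exact List.mem_append_right _ (mem_seqAlloc_cons_favorite P j _ hS)

theorem IsRankingOf.isGreedyRound_of_forall_balAlt (hbal : BalancedAlloc k M)
    (hp : IsRankingOf P k M p) (hout : ∀ π, BalAlt n k π → IsOutcome P π M) :
    ∀ t, 1 ≤ t → t ≤ k → IsGreedyRound P p t := by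
  intro t
  induction t using Nat.strong_induction_on with
  | _ t ih =>
  intro ht htk j o ho
  obtain ⟨σ, hσ, hround⟩ := exists_altRound_eq_cons j (t - 1)
  have hS : (allocatedBefore p t)ᶜ.Nonempty :=
    ⟨p j t, mem_compl.mpr (hp.notMem_allocatedBefore j ht htk)⟩
  set x := favorite (P j) (allocatedBefore p t)ᶜ hS
  have hpick := hp.favorite_mem_seqAlloc_of_altRound_eq_cons hσ ht htk
    (fun s h1 h2 => ih s h2 h1 (by omega)) hround hS
  obtain ⟨hσlen, hσcount⟩ := List.perm_finRange_iff.mp hσ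
  have hMx : M x = j := eq_of_mem_seqAlloc P (hout _ ⟨σ, hσlen, hσcount, rfl⟩ x) hpick
  have hxt := hp.le_of_notMem_allocatedBefore hbal ht (mem_compl.mp (favorite_mem (P j) _ hS))
  rw [hMx] at hxt
  exact (P j).le_trans _ _ _ (le_favorite _ _ hS (mem_compl.mpr ho)) hxt

end Ranking

end

theorem necessary_assignment_balanced_alternation_general
    {ι : Type} [Fintype ι] [DecidableEq ι] {n k : ℕ}
    (P : Fin n → LinearOrder ι) (M : ι → Fin n) (hbal : BalancedAlloc k M)
    (p : Fin n → ℕ → ι) (hp : IsRankingOf P k M p) :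
    (∀ π : List (Fin n), BalAlt n k π → IsOutcome P π M) ↔
      ∀ t : ℕ, 1 ≤ t → t ≤ k → ∀ j : Fin n, ∀ o : ι,
        o ∉ Finset.image (fun x : Fin n × ℕ => p x.1 x.2)
              (Finset.univ ×ˢ Finset.Ico 1 t) →
        (P j).le o (p j t) :=
  ⟨hp.isGreedyRound_of_forall_balAlt hbal,
    fun hg _ hπ => hp.isOutcome_of_isGreedyRound hbal hg hπ.recBalanced⟩

/-- A balanced allocation `M` is the outcome of every balanced alternation
policy if and only if for every round `1 ≤ t ≤ k` and every agent `j`, the item `p j t`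
is `j`'s most preferred item among the items not allocated by `M` in earlier rounds. -/
theorem necessary_assignment_balanced_alternation
    {ι : Type} [Fintype ι] [DecidableEq ι] {n k : ℕ} (hn : 0 < n) (hk : 1 ≤ k)
    (hcard : Fintype.card ι = k * n)
    (P : Fin n → LinearOrder ι) (M : ι → Fin n) (hbal : BalancedAlloc k M)
    (p : Fin n → ℕ → ι) (hp : IsRankingOf P k M p) :
    (∀ π : List (Fin n), BalAlt n k π → IsOutcome P π M) ↔
      ∀ t : ℕ, 1 ≤ t → t ≤ k → ∀ j : Fin n, ∀ o : ι,
        o ∉ Finset.image (fun x : Fin n × ℕ => p x.1 x.2)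
              (Finset.univ ×ˢ Finset.Ico 1 t) →
        (P j).le o (p j t) :=
  necessary_assignment_balanced_alternation_general P M hbal p hp
end

section
/- Let S ⊆ I, let a_i be an agent, and let o be agent a_i's most preferred item in I, and suppose o ∈ S (so o is the most preferred item of S for a_i). If there exists a policy under which agent a_i receives exactly the set S, then there exists a policy whose first turn belongs to a_i (so that a_i picks o at the first turn) under which a_i receives exactly the set S. -/
/-!
Let `π` give agent `a` exactly `S`, and let `a` pick her top item `o` at the turn `π = pre ++ a :: post`.
Then `o` is still available after `pre`, so nobody picks it during `pre`. Moving that turn to the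
front lets `a` take `o` first; afterwards `pre` runs exactly as before (it never touches `o`) and
leaves the same pool minus `o`, from which `post` proceeds as before. The picks of the new policy
are therefore those of `π`, reordered.
-/

open Finset
open scoped Classical

noncomputable def remaining {n : ℕ} {ι : Type} [DecidableEq ι]
    (P : Fin n → LinearOrder ι) : List (Fin n) → Finset ι → Finset ι
  | [], T => T
  | a :: rest, T =>
    if h : T.Nonempty then remaining P rest (T.erase (favorite (P a) T h)) else T

theorem favorite_eq_of_forall_le {ι : Type} (L : LinearOrder ι) {T : Finset ι}
    (hT : T.Nonempty) {x : ι} (hx : x ∈ T) (hmax : ∀ y ∈ T, L.le y x) :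
    favorite L T hT = x :=
  letI := L
  le_antisymm (T.max'_le hT x hmax) (T.le_max' x hx)

section SeqAlloc

variable {n : ℕ} {ι : Type} [DecidableEq ι] (P : Fin n → LinearOrder ι)

theorem seqAlloc_of_not_nonempty (L : List (Fin n)) {T : Finset ι} (hT : ¬ T.Nonempty) :
    seqAlloc P L T = [] := by
  cases L <;> simp [seqAlloc, hT]

theorem remaining_of_not_nonempty (L : List (Fin n)) {T : Finset ι} (hT : ¬ T.Nonempty) :
    remaining P L T = T := by
  cases L <;> simp [remaining, hT]

theorem seqAlloc_append (L₁ L₂ : List (Fin n)) (T : Finset ι) :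
    seqAlloc P (L₁ ++ L₂) T = seqAlloc P L₁ T ++ seqAlloc P L₂ (remaining P L₁ T) := by
  induction L₁ generalizing T with
  | nil => rfl
  | cons a rest ih =>
    by_cases hT : T.Nonempty
    · simp only [List.cons_append, seqAlloc, remaining, dif_pos hT, ih]
    · simp only [seqAlloc_of_not_nonempty P _ hT, remaining_of_not_nonempty P _ hT,
        List.nil_append]

theorem remaining_subset (L : List (Fin n)) (T : Finset ι) : remaining P L T ⊆ T := by
  induction L generalizing T with
  | nil => exact subset_rfl
  | cons a rest ih =>
    by_cases hT : T.Nonempty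
    · rw [remaining, dif_pos hT]
      exact (ih _).trans (erase_subset _ _)
    · rw [remaining_of_not_nonempty P _ hT]

theorem seqAlloc_cons_of_forall_le {a : Fin n} {o : ι} (htop : ∀ x : ι, (P a).le x o)
    (L : List (Fin n)) {T : Finset ι} (ho : o ∈ T) :
    seqAlloc P (a :: L) T = (a, o) :: seqAlloc P L (T.erase o) := by
  have hT : T.Nonempty := ⟨o, ho⟩
  rw [seqAlloc, dif_pos hT, favorite_eq_of_forall_le (P a) hT ho fun x _ => htop x]

theorem seqAlloc_erase_of_mem_remaining (L : List (Fin n)) {T : Finset ι} {o : ι}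
    (ho : o ∈ remaining P L T) :
    seqAlloc P L (T.erase o) = seqAlloc P L T ∧
      remaining P L (T.erase o) = (remaining P L T).erase o := by
  induction L generalizing T with
  | nil => exact ⟨rfl, rfl⟩
  | cons a rest ih =>
    have hoT : o ∈ T := remaining_subset P _ T ho
    have hT : T.Nonempty := ⟨o, hoT⟩
    set f := favorite (P a) T hT
    rw [remaining, dif_pos hT] at ho
    have hof : o ≠ f := ne_of_mem_erase (remaining_subset P rest _ ho)
    have hfT : f ∈ T.erase o := mem_erase.mpr ⟨hof.symm, @max'_mem ι (P a) T hT⟩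
    have hfav : favorite (P a) (T.erase o) ⟨f, hfT⟩ = f :=
      favorite_eq_of_forall_le (P a) _ hfT fun y hy => @le_max' ι (P a) T y (mem_of_mem_erase hy)
    have hTo : (T.erase o).Nonempty := ⟨f, hfT⟩
    obtain ⟨ih₁, ih₂⟩ := ih ho
    rw [erase_right_comm] at ih₁ ih₂
    refine ⟨?_, ?_⟩
    · rw [seqAlloc, dif_pos hTo, hfav, ih₁, seqAlloc, dif_pos hT]
    · rw [remaining, dif_pos hTo, hfav, ih₂, remaining, dif_pos hT]

theorem exists_eq_append_cons_of_mem_seqAlloc {π : List (Fin n)} {T : Finset ι} {a : Fin n}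
    {x : ι} (h : (a, x) ∈ seqAlloc P π T) :
    ∃ pre post, π = pre ++ a :: post ∧ x ∈ remaining P pre T := by
  induction π generalizing T with
  | nil => simp [seqAlloc] at h
  | cons b rest ih =>
    by_cases hT : T.Nonempty
    · rw [seqAlloc, dif_pos hT, List.mem_cons, Prod.mk.injEq] at h
      rcases h with ⟨rfl, rfl⟩ | h
      · exact ⟨[], rest, rfl, @max'_mem ι (P a) T hT⟩
      · obtain ⟨pre, post, rfl, hx⟩ := ih h
        exact ⟨b :: pre, post, rfl, by rwa [remaining, dif_pos hT]⟩
    · simp [seqAlloc_of_not_nonempty P _ hT] at h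

theorem seqAlloc_cons_append_perm {a : Fin n} {o : ι} (htop : ∀ x : ι, (P a).le x o)
    (pre post : List (Fin n)) {T : Finset ι} (ho : o ∈ remaining P pre T) :
    (seqAlloc P (a :: (pre ++ post)) T).Perm (seqAlloc P (pre ++ a :: post) T) := by
  obtain ⟨hpre, hrem⟩ := seqAlloc_erase_of_mem_remaining P pre ho
  rw [seqAlloc_cons_of_forall_le P htop _ (remaining_subset P pre T ho), seqAlloc_append,
    seqAlloc_append, seqAlloc_cons_of_forall_le P htop _ ho, hpre, hrem]
  exact List.perm_middle.symm

theorem receives_eq_of_perm [Fintype ι] {π π' : List (Fin n)}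
    (h : (seqAlloc P π univ).Perm (seqAlloc P π' univ)) (a : Fin n) :
    receives P π a = receives P π' a := by
  ext x
  simp only [receives, mem_filter, mem_univ, true_and, h.mem_iff]

end SeqAlloc

theorem first_pick_by_target_agent_general
    {ι : Type} [Fintype ι] [DecidableEq ι] {n k : ℕ}
    (P : Fin n → LinearOrder ι) (S : Finset ι) (ai : Fin n) (o : ι)
    (htop : ∀ x : ι, (P ai).le x o) (hoS : o ∈ S)
    (h : ∃ π : List (Fin n), π.length = k * n ∧ receives P π ai = S) :
    ∃ π : List (Fin n), π.length = k * n ∧ π.head? = some ai ∧ receives P π ai = S := by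
  obtain ⟨π, hlen, rfl⟩ := h
  have hpick : (ai, o) ∈ seqAlloc P π univ := by simpa [receives] using hoS
  obtain ⟨pre, post, rfl, ho⟩ := exists_eq_append_cons_of_mem_seqAlloc P hpick
  refine ⟨ai :: (pre ++ post), ?_, rfl, ?_⟩
  · simp only [List.length_cons, List.length_append] at hlen ⊢
    omega
  · exact receives_eq_of_perm P (seqAlloc_cons_append_perm P htop pre post ho) ai

/-- If `o` is agent `a_i`'s most preferred item in `I` and `o ∈ S`, and some
policy gives `a_i` exactly the set `S`, then some policy whose first turn belongs to
`a_i` also gives `a_i` exactly the set `S`. -/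
theorem first_pick_by_target_agent
    {ι : Type} [Fintype ι] [DecidableEq ι] {n k : ℕ} (hn : 0 < n) (hk : 1 ≤ k)
    (hcard : Fintype.card ι = k * n)
    (P : Fin n → LinearOrder ι) (S : Finset ι) (ai : Fin n) (o : ι)
    (htop : ∀ x : ι, (P ai).le x o) (hoS : o ∈ S)
    (h : ∃ π : List (Fin n), π.length = k * n ∧ receives P π ai = S) :
    ∃ π : List (Fin n), π.length = k * n ∧ π.head? = some ai ∧ receives P π ai = S :=
  first_pick_by_target_agent_general P S ai o htop hoS h
end

section
/- Suppose the allocation M is the outcome of a balanced alternation policy whose odd-numbered rounds use the order π' over the agents (and whose even-numbered rounds use the reverse of π'). Then for every edge a → b of the directed graph G_M, agent a precedes agent b in π'; in particular, G_M contains no cycle. -/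
open Finset
open scoped Classical

/-!
In the list of picks produced by sequential allocation, every agent strictly prefers her
pick to every later pick, since each pick is the maximum of a superset of what remains. So
an agent's picks come in decreasing order of her preference, and as every round of a
recursively balanced policy gives each agent exactly one turn, the item she picks in round
`i` is `p_j^i`. Within round `i` the same fact says that an agent moving earlier prefers her
own round-`i` item to that of any agent moving later. An odd edge `a → b` (`b` prefers
`p_a^i` to `p_b^i`) therefore forbids `b` to move before `a` in a round following `π'`, and an
even edge (`a` prefers `p_b^i`) forbids `a` to move before `b` in a round following the
reverse of `π'`. Either way `a` precedes `b` in `π'`, so positions in `π'` increase strictly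
along every path of `G_M`.
-/

section SequentialAllocation

variable {ι : Type} {n : ℕ}

theorem favorite_mem_s15 (L : LinearOrder ι) (S : Finset ι) (h : S.Nonempty) : favorite L S h ∈ S :=
  @Finset.max'_mem ι L S h

variable [DecidableEq ι]

theorem lt_favorite (L : LinearOrder ι) {S : Finset ι} (h : S.Nonempty) {y : ι}
    (hy : y ∈ S.erase (favorite L S h)) : L.lt y (favorite L S h) := by
  let _ := L
  exact lt_of_le_of_ne (S.le_max' y (Finset.mem_of_mem_erase hy)) (Finset.ne_of_mem_erase hy)

variable (P : Fin n → LinearOrder ι)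

theorem snd_mem_of_mem_seqAlloc :
    ∀ {turns : List (Fin n)} {S : Finset ι} {x : Fin n × ι},
      x ∈ seqAlloc P turns S → x.2 ∈ S
  | [], _, _, hx => by simp [seqAlloc] at hx
  | a :: rest, S, x, hx => by
    rw [seqAlloc] at hx
    split_ifs at hx with hS
    · rcases List.mem_cons.1 hx with rfl | hx
      · exact favorite_mem_s15 (P a) S hS
      · exact Finset.mem_of_mem_erase (snd_mem_of_mem_seqAlloc hx)
    · simp at hx

theorem pairwise_seqAlloc : ∀ (turns : List (Fin n)) (S : Finset ι),
    (seqAlloc P turns S).Pairwise (fun x y => (P x.1).lt y.2 x.2)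
  | [], _ => by simp [seqAlloc]
  | a :: rest, S => by
    rw [seqAlloc]
    split_ifs with hS
    · refine List.pairwise_cons.2 ⟨fun y hy => ?_, pairwise_seqAlloc rest _⟩
      exact lt_favorite (P a) hS (snd_mem_of_mem_seqAlloc P hy)
    · exact List.Pairwise.nil

theorem map_fst_seqAlloc : ∀ (turns : List (Fin n)) (S : Finset ι), turns.length ≤ S.card →
    (seqAlloc P turns S).map Prod.fst = turns
  | [], _, _ => by simp [seqAlloc]
  | a :: rest, S, h => by
    rw [List.length_cons] at h
    have hS : S.Nonempty := Finset.card_pos.1 (by omega)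
    have hrest : rest.length ≤ (S.erase (favorite (P a) S hS)).card := by
      rw [Finset.card_erase_of_mem (favorite_mem_s15 _ S hS)]; omega
    rw [seqAlloc, dif_pos hS, List.map_cons, map_fst_seqAlloc rest _ hrest]

end SequentialAllocation

theorem List.SortedGT.card_filter_getElem_lt {α : Type*} [LinearOrder α] {l : List α}
    (hl : l.SortedGT) {s : ℕ} (hs : s < l.length) :
    (l.toFinset.filter (l[s] < ·)).card = s := by
  have hfilter : l.toFinset.filter (l[s] < ·) = (l.take s).toFinset := by
    ext o
    simp only [Finset.mem_filter, List.mem_toFinset, List.mem_take_iff_getElem]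
    constructor
    · rintro ⟨ho, hlt⟩
      obtain ⟨t, ht, rfl⟩ := List.getElem_of_mem ho
      have hts : t < s := (hl.strictAnti_get.lt_iff_gt (a := ⟨s, hs⟩) (b := ⟨t, ht⟩)).1 hlt
      exact ⟨t, lt_min hts ht, rfl⟩
    · rintro ⟨t, ht, rfl⟩
      exact ⟨List.getElem_mem _, hl.getElem_gt_getElem_of_lt (lt_min_iff.1 ht).1⟩
  rw [hfilter, List.toFinset_card_of_nodup (hl.nodup.sublist (List.take_sublist _ _)),
    List.length_take, min_eq_left hs.le]

theorem List.idxOf_lt_idxOf_of_pairwise {α : Type*} [BEq α] [LawfulBEq α]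
    {R : α → α → Prop} {l : List α} {a b : α} (hl : l.Pairwise R) (ha : a ∈ l)
    (hne : a ≠ b) (hba : ¬ R b a) :
    l.idxOf a < l.idxOf b := by
  rcases lt_trichotomy (l.idxOf a) (l.idxOf b) with h | h | h
  · exact h
  · exact absurd ((List.idxOf_inj ha).1 h) hne
  · have hb : b ∈ l := List.idxOf_lt_length_iff.1 (h.trans (List.idxOf_lt_length_iff.2 ha))
    have hRba := List.pairwise_iff_getElem.1 hl _ _ (List.idxOf_lt_length_iff.2 hb)
      (List.idxOf_lt_length_iff.2 ha) h
    simp only [List.getElem_idxOf] at hRba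
    exact absurd hRba hba

theorem List.count_flatten_of_forall_count_eq_one {α : Type*} [BEq α] {rounds : List (List α)}
    {a : α} (h : ∀ σ ∈ rounds, σ.count a = 1) : rounds.flatten.count a = rounds.length := by
  rw [List.count_flatten, List.map_congr_left h, List.map_const', List.sum_replicate, smul_eq_mul,
    mul_one]

theorem List.exists_append_of_map_eq_flatten {α β : Type*} {f : α → β} {L : List α}
    {rounds : List (List β)} (h : L.map f = rounds.flatten) {r : ℕ} (hr : r < rounds.length) :
    ∃ A B C, L = A ++ B ++ C ∧ A.map f = (rounds.take r).flatten ∧ B.map f = rounds[r] := by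
  have hsplit := congrArg List.flatten (List.take_append_drop r rounds)
  rw [List.drop_eq_getElem_cons hr, List.flatten_append, List.flatten_cons] at hsplit
  rw [← hsplit, List.map_eq_append_iff] at h
  obtain ⟨A, BC, rfl, hA, hBC⟩ := h
  obtain ⟨B, C, rfl, hB, -⟩ := List.map_eq_append_iff.1 hBC
  exact ⟨A, B, C, by simp, hA, hB⟩

section Picks

variable {ι : Type} {n : ℕ}

def pickSeq (L : List (Fin n × ι)) (j : Fin n) : List ι :=
  (L.filter (·.1 = j)).map Prod.snd

@[simp]
theorem mem_pickSeq {L : List (Fin n × ι)} {j : Fin n} {o : ι} :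
    o ∈ pickSeq L j ↔ (j, o) ∈ L := by
  simp [pickSeq]

@[simp]
theorem pickSeq_append (A B : List (Fin n × ι)) (j : Fin n) :
    pickSeq (A ++ B) j = pickSeq A j ++ pickSeq B j := by
  simp [pickSeq]

theorem length_pickSeq (L : List (Fin n × ι)) (j : Fin n) :
    (pickSeq L j).length = (L.map Prod.fst).count j := by
  rw [pickSeq, List.length_map, List.count_eq_countP, List.countP_eq_length_filter, List.filter_map,
    List.length_map]
  rfl

theorem pairwise_pickSeq (P : Fin n → LinearOrder ι) {L : List (Fin n × ι)}
    (hL : L.Pairwise (fun x y => (P x.1).lt y.2 x.2)) (j : Fin n) :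
    (pickSeq L j).Pairwise (fun u v => (P j).lt v u) := by
  rw [pickSeq, List.pairwise_map]
  exact (hL.filter _).imp_of_mem fun hx hy h => by
    simp only [List.mem_filter, decide_eq_true_eq] at hx hy
    rwa [hx.2] at h

end Picks

section Outcome

variable {ι : Type} [Fintype ι] [DecidableEq ι] {n k : ℕ} {P : Fin n → LinearOrder ι}
  {M : ι → Fin n} {p : Fin n → ℕ → ι}

theorem IsRankingOf.eq_getElem (hp : IsRankingOf P k M p) {j : Fin n} {l : List ι}
    (hl : l.Pairwise (fun u v => (P j).lt v u)) (hM : ∀ o, M o = j ↔ o ∈ l) {r : ℕ}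
    (hr : r < k) (hrl : r < l.length) : p j (r + 1) = l[r] := by
  let _ := P j
  obtain ⟨hpj, hrank⟩ := hp j (r + 1) (by omega) (by omega)
  obtain ⟨s, hs, hps⟩ := List.getElem_of_mem ((hM _).1 hpj)
  have hfilter : (Finset.univ.filter fun o => M o = j ∧ p j (r + 1) < o) =
      l.toFinset.filter (l[s] < ·) := by
    ext o
    simp [hM, hps]
  have hsr : s = r := by
    rw [hfilter, add_tsub_cancel_right] at hrank
    rw [← hrank]
    convert (hl.sortedGT.card_filter_getElem_lt hs).symm
  subst hsr
  exact hps.symm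

theorem IsOutcome.eq_iff_mem {π : List (Fin n)} (hout : IsOutcome P π M) {o : ι} {j : Fin n} :
    M o = j ↔ (j, o) ∈ seqAlloc P π Finset.univ := by
  refine ⟨fun h => h ▸ hout o, fun hj => ?_⟩
  have hnodup : ((seqAlloc P π Finset.univ).map Prod.snd).Nodup :=
    List.pairwise_map.2 <| (pairwise_seqAlloc P π _).imp fun {x _} h => by
      let _ := P x.1
      exact (ne_of_lt h).symm
  exact congrArg Prod.fst (List.inj_on_of_nodup_map hnodup (hout o) hj rfl)

theorem IsOutcome.pairwise_round {rounds : List (List (Fin n))}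
    (hround : ∀ σ ∈ rounds, ∀ j, σ.count j = 1)
    (hcard : rounds.flatten.length ≤ Fintype.card ι)
    (hout : IsOutcome P rounds.flatten M) (hp : IsRankingOf P rounds.length M p) {r : ℕ}
    (hr : r < rounds.length) :
    rounds[r].Pairwise (fun u v => (P u).lt (p v (r + 1)) (p u (r + 1))) := by
  have hL := pairwise_seqAlloc P rounds.flatten Finset.univ
  obtain ⟨A, B, C, hABC, hA, hB⟩ :=
    List.exists_append_of_map_eq_flatten (map_fst_seqAlloc P _ _ (by rwa [Finset.card_univ])) hr
  have hpick : ∀ x ∈ B, p x.1 (r + 1) = x.2 := by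
    intro x hx
    have hbefore : (pickSeq A x.1).length = r := by
      rw [length_pickSeq, hA, List.count_flatten_of_forall_count_eq_one
        (fun σ hσ => hround σ (List.mem_of_mem_take hσ) _), List.length_take, min_eq_left hr.le]
    have hduring : pickSeq B x.1 = [x.2] := by
      obtain ⟨y, hy⟩ := List.length_eq_one_iff.1 (show (pickSeq B x.1).length = 1 by
        rw [length_pickSeq, hB]; exact hround _ (List.getElem_mem hr) _)
      have hxB : x.2 ∈ pickSeq B x.1 := mem_pickSeq.2 hx
      rw [hy, List.mem_singleton] at hxB
      rw [hy, hxB]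
    have hpicks : pickSeq (seqAlloc P rounds.flatten Finset.univ) x.1 =
        pickSeq A x.1 ++ [x.2] ++ pickSeq C x.1 := by
      rw [hABC, pickSeq_append, pickSeq_append, hduring]
    rw [hp.eq_getElem (pairwise_pickSeq P hL x.1) (fun o => hout.eq_iff_mem.trans mem_pickSeq.symm)
      hr (by simp [hpicks, hbefore])]
    simp [hpicks, hbefore]
  have hBmap : B = rounds[r].map (fun j => (j, p j (r + 1))) := by
    rw [← hB, List.map_map]
    conv_lhs => rw [← List.map_id B]
    exact List.map_congr_left fun x hx => by simp [hpick x hx]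
  have hBpw := (List.pairwise_append.1 (List.pairwise_append.1 (hABC ▸ hL)).1).2.1
  rwa [hBmap, List.pairwise_map] at hBpw

end Outcome

theorem balanced_alternation_GM_acyclic_general
    {ι : Type} [Fintype ι] [DecidableEq ι] {n k : ℕ}
    (hcard : Fintype.card ι = k * n)
    (P : Fin n → LinearOrder ι) (M : ι → Fin n)
    (p : Fin n → ℕ → ι) (hp : IsRankingOf P k M p)
    (π' : List (Fin n)) (hlen : π'.length = n) (hperm : ∀ a : Fin n, π'.count a = 1)
    (hout : IsOutcome P
      (((List.range k).map (fun r => if r % 2 = 0 then π' else π'.reverse)).flatten) M) :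
    (∀ a b : Fin n, GM P k p a b → π'.idxOf a < π'.idxOf b) ∧
      ∀ a : Fin n, ¬ Relation.TransGen (GM P k p) a a := by
  set rounds := (List.range k).map (fun r => if r % 2 = 0 then π' else π'.reverse)
  have hlength : rounds.length = k := by simp [rounds]
  have hcount : ∀ σ ∈ rounds, ∀ j, σ.count j = 1 := by
    simp only [rounds, List.mem_map]
    rintro σ ⟨r, -, rfl⟩ j
    split_ifs <;> simp [hperm]
  have hflat : rounds.flatten.length ≤ Fintype.card ι := by
    simp [rounds, List.length_flatten, Function.comp_def, apply_ite List.length, hlen, hcard]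
  have hround : ∀ r < k, (if r % 2 = 0 then π' else π'.reverse).Pairwise
      (fun u v => (P u).lt (p v (r + 1)) (p u (r + 1))) := fun r hr => by
    have h := hout.pairwise_round hcount hflat (hlength ▸ hp) (r := r) (by rwa [hlength])
    rwa [List.getElem_map, List.getElem_range] at h
  have hmem : ∀ a, a ∈ π' := fun a => List.count_pos_iff.1 (by rw [hperm]; omega)
  have hedge : ∀ a b, GM P k p a b → π'.idxOf a < π'.idxOf b := by
    rintro a b (⟨i, hi, hik, hodd, hlt⟩ | ⟨i, hi, hik, heven, hlt⟩) <;>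
      obtain ⟨r, rfl⟩ : ∃ r, i = r + 1 := ⟨i - 1, by omega⟩
    · have h := hround r (by omega)
      rw [if_pos (by omega)] at h
      exact List.idxOf_lt_idxOf_of_pairwise h (hmem a)
        (by rintro rfl; exact @lt_irrefl _ (P a).toPreorder _ hlt)
        (@lt_asymm _ (P b).toPreorder _ _ hlt)
    · have h := hround r (by omega)
      rw [if_neg (by omega), List.pairwise_reverse] at h
      exact List.idxOf_lt_idxOf_of_pairwise h (hmem a)
        (by rintro rfl; exact @lt_irrefl _ (P a).toPreorder _ hlt)
        (@lt_asymm _ (P a).toPreorder _ _ hlt)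
  refine ⟨hedge, fun a ha => lt_irrefl (π'.idxOf a) ?_⟩
  have hlt := Relation.TransGen.lift (fun i => π'.idxOf i) hedge a a ha
  rwa [Function.onFun, Relation.transGen_eq_self] at hlt

/-- If `M` is the outcome of the balanced alternation policy whose
odd-numbered rounds use the order `π'` (and even-numbered rounds its reverse), then every
edge `a → b` of `G_M` satisfies that `a` precedes `b` in `π'`; in particular `G_M` is
acyclic. -/
theorem balanced_alternation_GM_acyclic
    {ι : Type} [Fintype ι] [DecidableEq ι] {n k : ℕ} (hn : 0 < n) (hk : 1 ≤ k)
    (hcard : Fintype.card ι = k * n)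
    (P : Fin n → LinearOrder ι) (M : ι → Fin n) (hbal : BalancedAlloc k M)
    (p : Fin n → ℕ → ι) (hp : IsRankingOf P k M p)
    (π' : List (Fin n)) (hlen : π'.length = n) (hperm : ∀ a : Fin n, π'.count a = 1)
    (hout : IsOutcome P
      (((List.range k).map (fun r => if r % 2 = 0 then π' else π'.reverse)).flatten) M) :
    (∀ a b : Fin n, GM P k p a b → π'.idxOf a < π'.idxOf b) ∧
      ∀ a : Fin n, ¬ Relation.TransGen (GM P k p) a a :=
  balanced_alternation_GM_acyclic_general hcard P M p hp π' hlen hperm hout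
end
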